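/- Let G be an LWF chain graph and T ∈ V. For every X ∈ Mb(T), the vertices T and X are not c-separated given Mb(T)∖{X}. -/

import Mathlib

/- Formalization of LWF chain graphs, routes, sections, c-separation,
   minimal complexes, Markov blankets, moral graphs, and ancestral sets. -/

namespace LWF

/-- An LWF chain graph: a mixed graph with directed edges `dir` and (symmetric)
undirected edges `undir`, no loops, no pair of vertices joined by more than one
edge, and no partially directed cycles. -/
structure ChainGraph (V : Type*) where
  dir : V → V → Prop
  undir : V → V → Prop
  undir_symm : ∀ u v, undir u v → undir v u
  dir_irrefl : ∀ v, ¬ dir v v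
  undir_irrefl : ∀ v, ¬ undir v v
  dir_asymm : ∀ u v, dir u v → ¬ dir v u
  dir_not_undir : ∀ u v, dir u v → ¬ undir u v
  /-- No partially directed cycle: there is no sequence `ρ 0, …, ρ n` (`n ≥ 2`)
  with `ρ n = ρ 0`, the vertices `ρ 0, …, ρ (n-1)` distinct, every consecutive
  pair joined by `dir` or `undir` (in the forward direction), and at least one
  forward directed edge on it. -/
  no_partially_directed_cycle :
    ∀ (n : ℕ) (ρ : ℕ → V), 2 ≤ n → ρ n = ρ 0 →
      (∀ i j, i < j → j < n → ρ i ≠ ρ j) →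
      (∀ i, i < n → dir (ρ i) (ρ (i+1)) ∨ undir (ρ i) (ρ (i+1))) →
      ¬ ∃ i, i < n ∧ dir (ρ i) (ρ (i+1))

namespace ChainGraph

variable {V : Type*}

/-- Two vertices are adjacent if they are joined by a directed or an undirected edge. -/
def Adj (G : ChainGraph V) (u v : V) : Prop := G.dir u v ∨ G.dir v u ∨ G.undir u v

/-- A partially directed path from `u` to `w`: a sequence of distinct vertices,
each consecutive pair joined by a forward directed or an undirected edge, with
at least one directed edge on it. -/
def PDPath (G : ChainGraph V) (u w : V) : Prop :=
  ∃ (n : ℕ) (ρ : ℕ → V), 1 ≤ n ∧ ρ 0 = u ∧ ρ n = w ∧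
    (∀ i j, i ≤ n → j ≤ n → i ≠ j → ρ i ≠ ρ j) ∧
    (∀ i, i < n → G.dir (ρ i) (ρ (i+1)) ∨ G.undir (ρ i) (ρ (i+1))) ∧
    (∃ i, i < n ∧ G.dir (ρ i) (ρ (i+1)))

/-- `an(Z)`: the set of vertices having a partially directed path to some vertex of `Z`. -/
def anc (G : ChainGraph V) (Z : Set V) : Set V := {x | ∃ z ∈ Z, G.PDPath x z}

/-- Parents of `v`. -/
def pa (G : ChainGraph V) (v : V) : Set V := {u | G.dir u v}

/-- Children of `v`. -/
def ch (G : ChainGraph V) (v : V) : Set V := {u | G.dir v u}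

/-- Neighbours of `v`. -/
def nb (G : ChainGraph V) (v : V) : Set V := {u | G.undir u v}

/-- A minimal complex `a → ρ 1 − ⋯ − ρ n ← b` (with `ρ 0 = a`, `ρ (n+1) = b`,
`n ≥ 1`): all vertices distinct, the indicated edges present, and it is an
induced subgraph, i.e. the only adjacencies among its vertices are between
consecutive ones (in particular `a` and `b` are non-adjacent). -/
def IsMinimalComplex (G : ChainGraph V) (a b : V) (n : ℕ) (ρ : ℕ → V) : Prop :=
  1 ≤ n ∧ ρ 0 = a ∧ ρ (n+1) = b ∧
  (∀ i j, i ≤ n+1 → j ≤ n+1 → i ≠ j → ρ i ≠ ρ j) ∧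
  G.dir a (ρ 1) ∧ G.dir b (ρ n) ∧
  (∀ i, 1 ≤ i → i < n → G.undir (ρ i) (ρ (i+1))) ∧
  (∀ i j, i ≤ n+1 → j ≤ n+1 → G.Adj (ρ i) (ρ j) → j = i+1 ∨ i = j+1)

/-- Complex-spouses of `a`. -/
def csp (G : ChainGraph V) (a : V) : Set V := {b | ∃ n ρ, G.IsMinimalComplex a b n ρ}

/-- The Markov blanket of `T`: parents, neighbours, children and complex-spouses of `T`. -/
def mb (G : ChainGraph V) (T : V) : Set V := G.pa T ∪ G.nb T ∪ G.ch T ∪ G.csp T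

/-- A route in `G`: a sequence of `len + 1` vertices `vtx 0, …, vtx len`
(hence nonempty), each consecutive pair joined by an edge of `G`. -/
structure Route (G : ChainGraph V) where
  len : ℕ
  vtx : ℕ → V
  link : ∀ i, i < len → G.Adj (vtx i) (vtx (i+1))

/-- The positions `a, …, b` of the route form a section: all steps inside are
undirected edges, and the run is maximal on both sides. -/
def Route.IsSection {G : ChainGraph V} (ω : Route G) (a b : ℕ) : Prop :=
  a ≤ b ∧ b ≤ ω.len ∧
  (∀ k, a ≤ k → k < b → G.undir (ω.vtx k) (ω.vtx (k+1))) ∧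
  (0 < a → ¬ G.undir (ω.vtx (a-1)) (ω.vtx a)) ∧
  (b < ω.len → ¬ G.undir (ω.vtx b) (ω.vtx (b+1)))

/-- A collider section: a section which the route enters by an arrowhead at both
ends, i.e. `vtx (a-1) → vtx a − ⋯ − vtx b ← vtx (b+1)` occurs on the route. -/
def Route.IsColliderSection {G : ChainGraph V} (ω : Route G) (a b : ℕ) : Prop :=
  ω.IsSection a b ∧ 0 < a ∧ b < ω.len ∧
  G.dir (ω.vtx (a-1)) (ω.vtx a) ∧ G.dir (ω.vtx (b+1)) (ω.vtx b)

/-- A route is active with respect to `Z` if every collider section of it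
contains a vertex of `Z ∪ an(Z)` and no vertex of any non-collider section is in `Z`. -/
def Route.Active {G : ChainGraph V} (ω : Route G) (Z : Set V) : Prop :=
  (∀ a b, ω.IsColliderSection a b → ∃ k, a ≤ k ∧ k ≤ b ∧ ω.vtx k ∈ Z ∪ G.anc Z) ∧
  (∀ a b, ω.IsSection a b → ¬ ω.IsColliderSection a b →
    ∀ k, a ≤ k → k ≤ b → ω.vtx k ∉ Z)

/-- A route is intercepted (blocked) by `Z` if it is not active with respect to `Z`. -/
def Route.Intercepted {G : ChainGraph V} (ω : Route G) (Z : Set V) : Prop :=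
  ¬ ω.Active Z

/-- `X` and `Y` are c-separated given `Z`: every route between a vertex of `X`
and a vertex of `Y` is intercepted by `Z`. -/
def CSep (G : ChainGraph V) (X Y Z : Set V) : Prop :=
  ∀ ω : Route G,
    ((ω.vtx 0 ∈ X ∧ ω.vtx ω.len ∈ Y) ∨ (ω.vtx 0 ∈ Y ∧ ω.vtx ω.len ∈ X)) →
    ω.Intercepted Z

/-- Moral graph adjacency: distinct `u`, `v` are adjacent in `G^m` iff they are
adjacent in `G` or are complex-spouses. -/
def MoralAdj (G : ChainGraph V) (u v : V) : Prop :=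
  u ≠ v ∧ (G.dir u v ∨ G.dir v u ∨ G.undir u v ∨ u ∈ G.csp v ∨ v ∈ G.csp u)

/-- A set `A` is ancestral if it contains the boundary (parents and neighbours)
of each of its elements. -/
def Ancestral (G : ChainGraph V) (A : Set V) : Prop :=
  ∀ a ∈ A, ∀ u, (G.dir u a ∨ G.undir u a) → u ∈ A

/-- `An(A)`: the smallest ancestral set containing `A`. -/
def An (G : ChainGraph V) (A : Set V) : Set V :=
  ⋂₀ {B : Set V | A ⊆ B ∧ G.Ancestral B}

/-- A minimal complex of the induced subgraph `G_A`: a minimal complex of `G`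
all of whose vertices lie in `A`. -/
def IsMinimalComplexIn (G : ChainGraph V) (A : Set V) (a b : V) (n : ℕ) (ρ : ℕ → V) : Prop :=
  G.IsMinimalComplex a b n ρ ∧ ∀ i, i ≤ n+1 → ρ i ∈ A

/-- Adjacency in the moral graph `(G_A)^m` of the induced subgraph of `G` on `A`:
distinct `u, v ∈ A` joined by an edge of `G`, or complex-spouses in `G_A`. -/
def MoralAdjIn (G : ChainGraph V) (A : Set V) (u v : V) : Prop :=
  u ∈ A ∧ v ∈ A ∧ u ≠ v ∧
    (G.dir u v ∨ G.dir v u ∨ G.undir u v ∨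
      (∃ n ρ, G.IsMinimalComplexIn A u v n ρ) ∨ (∃ n ρ, G.IsMinimalComplexIn A v u n ρ))

end ChainGraph

/-- A path from `u` to `v` in an undirected graph with adjacency relation `R`:
a sequence of `n + 1 ≥ 2` distinct vertices `ρ 0 = u, …, ρ n = v` with each
consecutive pair adjacent. -/
def UPath {V : Type*} (R : V → V → Prop) (u v : V) (n : ℕ) (ρ : ℕ → V) : Prop :=
  1 ≤ n ∧ ρ 0 = u ∧ ρ n = v ∧
  (∀ i j, i ≤ n → j ≤ n → i ≠ j → ρ i ≠ ρ j) ∧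
  (∀ i, i < n → R (ρ i) (ρ (i+1)))

end LWF

/-!
Every member `X` of `Mb(T)` is either adjacent to `T`, in which case the single edge between
them is an active route, or a complex-spouse of `T`, with a minimal complex
`T → v₁ − ⋯ − vᵣ ← X`. Along that complex the only collider section is `v₁ − ⋯ − vᵣ`, and it
meets `Mb(T) ∖ {X}` in the child `v₁` of `T`; the two remaining sections `{T}` and `{X}` avoid
`Mb(T) ∖ {X}`, since `T ∉ Mb(T)`. So the complex itself is an active route from `T` to `X`.
-/

namespace LWF

namespace ChainGraph

variable {V : Type*} {G : ChainGraph V}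

theorem self_notMem_mb (G : ChainGraph V) (T : V) : T ∉ G.mb T := by
  rintro (((h | h) | h) | ⟨n, ρ, hn, h0, hlast, hdist, -⟩)
  · exact G.dir_irrefl T h
  · exact G.undir_irrefl T h
  · exact G.dir_irrefl T h
  · exact hdist 0 (n + 1) (Nat.zero_le _) le_rfl (by omega) (h0.trans hlast.symm)

theorem not_cSep_of_active {Z : Set V} {u v : V} (ω : Route G) (h0 : ω.vtx 0 = u)
    (hlen : ω.vtx ω.len = v) (hω : ω.Active Z) : ¬ G.CSep {u} {v} Z :=
  fun hsep => hsep ω (Or.inl ⟨h0, hlen⟩) hω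

namespace Route

def ofAdj {u v : V} (h : G.Adj u v) : Route G where
  len := 1
  vtx i := if i = 0 then u else v
  link i hi := by
    obtain rfl : i = 0 := by omega
    simpa using h

theorem ofAdj_active {Z : Set V} {u v : V} (h : G.Adj u v) (hu : u ∉ Z) (hv : v ∉ Z) :
    (ofAdj h).Active Z := by
  refine ⟨fun a b ⟨⟨_, hb, _⟩, ha, hb', _⟩ => ?_, fun a b _ _ k _ _ => ?_⟩
  · simp only [ofAdj] at hb hb'
    omega
  · simp only [ofAdj]
    split_ifs
    exacts [hu, hv]

end Route

theorem not_cSep_of_adj {Z : Set V} {u v : V} (hu : u ∉ Z) (hv : v ∉ Z) (h : G.Adj u v) :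
    ¬ G.CSep {u} {v} Z :=
  not_cSep_of_active (Route.ofAdj h) rfl rfl (Route.ofAdj_active h hu hv)

/-- `ρ 0 → ρ 1 − ⋯ − ρ n ← ρ (n+1)`: a complex, not required to be induced. -/
def IsComplex (G : ChainGraph V) (n : ℕ) (ρ : ℕ → V) : Prop :=
  1 ≤ n ∧ G.dir (ρ 0) (ρ 1) ∧ G.dir (ρ (n + 1)) (ρ n) ∧
    ∀ i, 1 ≤ i → i < n → G.undir (ρ i) (ρ (i + 1))

theorem IsMinimalComplex.isComplex {a b : V} {n : ℕ} {ρ : ℕ → V}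
    (h : G.IsMinimalComplex a b n ρ) : G.IsComplex n ρ := by
  obtain ⟨hn, rfl, rfl, -, hfirst, hlast, hund, -⟩ := h
  exact ⟨hn, hfirst, hlast, hund⟩

namespace IsComplex

variable {n : ℕ} {ρ : ℕ → V} (h : G.IsComplex n ρ)
include h

theorem adj (i : ℕ) (hi : i < n + 1) : G.Adj (ρ i) (ρ (i + 1)) := by
  obtain ⟨hn, hfirst, hlast, hund⟩ := h
  rcases Nat.eq_zero_or_pos i with rfl | hi0
  · exact Or.inl hfirst
  · rcases eq_or_ne i n with rfl | hin
    · exact Or.inr (Or.inl hlast)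
    · exact Or.inr (Or.inr (hund i hi0 (by omega)))

theorem not_undir_zero_one : ¬ G.undir (ρ 0) (ρ 1) :=
  G.dir_not_undir _ _ h.2.1

theorem not_undir_last : ¬ G.undir (ρ n) (ρ (n + 1)) :=
  fun hu => G.dir_not_undir _ _ h.2.2.1 (G.undir_symm _ _ hu)

def route : Route G := ⟨n + 1, ρ, h.adj⟩

theorem route_isSection_cases {a b : ℕ} (hs : h.route.IsSection a b) :
    (a = 0 ∧ b = 0) ∨ (a = 1 ∧ b = n) ∨ (a = n + 1 ∧ b = n + 1) := by
  obtain ⟨hab, hb, hin, hleft, hright⟩ := hs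
  simp only [route] at hb hin hleft hright
  have hund := h.2.2.2
  by_cases ha0 : a = 0
  · subst ha0
    exact Or.inl ⟨rfl, Nat.eq_zero_of_not_pos fun hb0 => h.not_undir_zero_one (hin 0 le_rfl hb0)⟩
  by_cases hal : a = n + 1
  · exact Or.inr (Or.inr ⟨hal, by omega⟩)
  have ha1 : a = 1 := by
    by_contra ha1
    refine hleft (by omega) ?_
    simpa [show a - 1 + 1 = a by omega] using hund (a - 1) (by omega) (by omega)
  subst ha1
  have hbn : b ≤ n := by
    by_contra hbn
    exact h.not_undir_last (hin n (by omega) (by omega))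
  exact Or.inr (Or.inl ⟨rfl, by_contra fun hb' => hright (by omega) (hund b hab (by omega))⟩)

theorem route_isColliderSection : h.route.IsColliderSection 1 n :=
  ⟨⟨h.1, n.le_succ, h.2.2.2, fun _ => h.not_undir_zero_one, fun _ => h.not_undir_last⟩,
    Nat.one_pos, n.lt_succ_self, h.2.1, h.2.2.1⟩

theorem route_active {Z : Set V} (h0 : ρ 0 ∉ Z) (hlast : ρ (n + 1) ∉ Z)
    (hmid : ∃ k, 1 ≤ k ∧ k ≤ n ∧ ρ k ∈ Z ∪ G.anc Z) : h.route.Active Z := by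
  constructor
  · intro a b hc
    obtain ⟨hs, ha, hb, -⟩ := hc
    rcases h.route_isSection_cases hs with ⟨rfl, -⟩ | ⟨rfl, rfl⟩ | ⟨-, rfl⟩
    · exact absurd ha (lt_irrefl 0)
    · exact hmid
    · exact absurd hb (lt_irrefl _)
  · intro a b hs hnc k hak hkb
    rcases h.route_isSection_cases hs with ⟨rfl, rfl⟩ | ⟨rfl, rfl⟩ | ⟨rfl, rfl⟩
    · obtain rfl : k = 0 := by omega
      exact h0
    · exact absurd h.route_isColliderSection hnc
    · obtain rfl : k = n + 1 := by omega
      exact hlast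

theorem not_cSep {Z : Set V} (h0 : ρ 0 ∉ Z) (hlast : ρ (n + 1) ∉ Z)
    (hmid : ∃ k, 1 ≤ k ∧ k ≤ n ∧ ρ k ∈ Z ∪ G.anc Z) : ¬ G.CSep {ρ 0} {ρ (n + 1)} Z :=
  not_cSep_of_active h.route rfl rfl (h.route_active h0 hlast hmid)

end IsComplex

end ChainGraph

theorem mb_member_not_cSep_general {V : Type*} (G : ChainGraph V)
    (T X : V) (hX : X ∈ G.mb T) :
    ¬ G.CSep {T} {X} (G.mb T \ {X}) := by
  have hT : T ∉ G.mb T \ {X} := fun h => G.self_notMem_mb T h.1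
  have hX' : X ∉ G.mb T \ {X} := fun h => h.2 rfl
  rcases hX with ((hpa | hnb) | hch) | ⟨n, ρ, hρ⟩
  · exact ChainGraph.not_cSep_of_adj hT hX' (Or.inr (Or.inl hpa))
  · exact ChainGraph.not_cSep_of_adj hT hX' (Or.inr (Or.inr (G.undir_symm X T hnb)))
  · exact ChainGraph.not_cSep_of_adj hT hX' (Or.inl hch)
  · have hcomplex := hρ.isComplex
    obtain ⟨hn, rfl, rfl, hdist, hchild, -⟩ := hρ
    have hρ1 : ρ 1 ∈ G.mb (ρ 0) \ {ρ (n + 1)} :=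
      ⟨Or.inl (Or.inr hchild), hdist 1 (n + 1) (by omega) le_rfl (by omega)⟩
    exact hcomplex.not_cSep hT hX' ⟨1, le_rfl, hn, Or.inl hρ1⟩

/-- For every `X ∈ Mb(T)`, the vertices `T` and `X` are not
c-separated given `Mb(T) ∖ {X}`. -/
theorem mb_member_not_cSep {V : Type*} [Fintype V] (G : ChainGraph V)
    (T X : V) (hX : X ∈ G.mb T) :
    ¬ G.CSep {T} {X} (G.mb T \ {X}) :=
  mb_member_not_cSep_general G T X hX

end LWF
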